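/- For 1 < θ ≤ 2 the Yeo–Johnson transformation Λ_θ is convex on ℝ, and for 0 ≤ θ < 1 it is concave on ℝ. -/

import Mathlib

/-!
Λ_θ is differentiable everywhere: on `t ≥ 0` it is the Box–Cox transform with parameter `θ` of
`t + 1`, on `t ≤ 0` minus the Box–Cox transform with parameter `2 - θ` of `1 - t`, and both
one-sided derivatives at `0` equal `1`. Its derivative is `(t + 1) ^ (θ - 1)` for `t ≥ 0` and
`(1 - t) ^ (1 - θ)` for `t < 0`, which is increasing when `θ ≥ 1`; the reflection
`t ↦ -t`, `θ ↦ 2 - θ` turns this into a decreasing derivative when `θ ≤ 1`.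
-/

/-- The Yeo–Johnson transformation. -/
noncomputable def YJ (θ t : ℝ) : ℝ :=
  if 0 ≤ t then
    if θ = 0 then Real.log (t + 1) else ((t + 1) ^ θ - 1) / θ
  else
    if θ = 2 then -Real.log (-t + 1) else -(((-t + 1) ^ (2 - θ) - 1) / (2 - θ))

open Real Set

noncomputable def boxCox (p x : ℝ) : ℝ :=
  if p = 0 then log x else (x ^ p - 1) / p

lemma boxCox_one (p : ℝ) : boxCox p 1 = 0 := by
  unfold boxCox
  split_ifs <;> simp

lemma hasDerivAt_boxCox (p : ℝ) {x : ℝ} (hx : 0 < x) :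
    HasDerivAt (boxCox p) (x ^ (p - 1)) x := by
  by_cases hp : p = 0
  · subst hp
    have hlog : boxCox 0 = log := funext fun y => by simp [boxCox]
    rw [hlog, zero_sub, rpow_neg_one]
    exact hasDerivAt_log hx.ne'
  · have hpow : boxCox p = fun y => (y ^ p - 1) / p := funext fun y => by simp [boxCox, hp]
    rw [hpow]
    have h := ((hasDerivAt_rpow_const (p := p) (Or.inl hx.ne')).sub_const 1).div_const p
    rwa [mul_div_cancel_left₀ _ hp] at h

lemma YJ_of_nonneg (θ : ℝ) {t : ℝ} (ht : 0 ≤ t) : YJ θ t = boxCox θ (t + 1) := by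
  simp [YJ, boxCox, ht]

lemma YJ_of_nonpos (θ : ℝ) {t : ℝ} (ht : t ≤ 0) : YJ θ t = -boxCox (2 - θ) (-t + 1) := by
  rcases ht.eq_or_lt with rfl | ht
  · rw [YJ_of_nonneg θ le_rfl, neg_zero, zero_add, boxCox_one, boxCox_one, neg_zero]
  · by_cases hθ : θ = 2
    · simp [YJ, boxCox, ht.not_ge, hθ]
    · simp [YJ, boxCox, ht.not_ge, hθ, sub_eq_zero, Ne.symm hθ]

noncomputable def yjDeriv (θ t : ℝ) : ℝ :=
  if 0 ≤ t then (t + 1) ^ (θ - 1) else (-t + 1) ^ (1 - θ)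

lemma hasDerivWithinAt_YJ_Ici (θ : ℝ) {t : ℝ} (ht : 0 ≤ t) :
    HasDerivWithinAt (YJ θ) ((t + 1) ^ (θ - 1)) (Ici 0) t := by
  have h := (hasDerivAt_boxCox θ (by linarith : 0 < t + 1)).comp_add_const t 1
  exact h.hasDerivWithinAt.congr (fun s hs => YJ_of_nonneg θ hs) (YJ_of_nonneg θ ht)

lemma hasDerivWithinAt_YJ_Iic (θ : ℝ) {t : ℝ} (ht : t ≤ 0) :
    HasDerivWithinAt (YJ θ) ((-t + 1) ^ (1 - θ)) (Iic 0) t := by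
  have h := ((hasDerivAt_boxCox (2 - θ) (by linarith : 0 < -t + 1)).comp t
    ((hasDerivAt_neg t).add_const 1)).neg
  rw [show (2 - θ - 1 : ℝ) = 1 - θ by ring, mul_neg_one, neg_neg] at h
  exact h.hasDerivWithinAt.congr (fun s hs => YJ_of_nonpos θ hs) (YJ_of_nonpos θ ht)

lemma hasDerivAt_YJ (θ t : ℝ) : HasDerivAt (YJ θ) (yjDeriv θ t) t := by
  rcases lt_trichotomy t 0 with ht | rfl | ht
  · rw [yjDeriv, if_neg ht.not_ge]
    exact (hasDerivWithinAt_YJ_Iic θ ht.le).hasDerivAt (Iic_mem_nhds ht)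
  · have hleft := hasDerivWithinAt_YJ_Iic θ le_rfl
    have hright := hasDerivWithinAt_YJ_Ici θ le_rfl
    rw [neg_zero, zero_add, one_rpow] at hleft
    rw [zero_add, one_rpow] at hright
    have hglued := hleft.union hright
    rw [Iic_union_Ici, hasDerivWithinAt_univ] at hglued
    rwa [yjDeriv, if_pos le_rfl, zero_add, one_rpow]
  · rw [yjDeriv, if_pos ht.le]
    exact (hasDerivWithinAt_YJ_Ici θ ht.le).hasDerivAt (Ici_mem_nhds ht)

lemma deriv_YJ (θ : ℝ) : deriv (YJ θ) = yjDeriv θ :=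
  funext fun t => (hasDerivAt_YJ θ t).deriv

lemma differentiable_YJ (θ : ℝ) : Differentiable ℝ (YJ θ) :=
  fun t => (hasDerivAt_YJ θ t).differentiableAt

lemma yjDeriv_neg (θ t : ℝ) : yjDeriv θ (-t) = yjDeriv (2 - θ) t := by
  rcases lt_trichotomy t 0 with ht | rfl | ht
  · rw [yjDeriv, yjDeriv, if_pos (neg_nonneg.mpr ht.le), if_neg ht.not_ge]
    ring_nf
  · simp [yjDeriv]
  · rw [yjDeriv, yjDeriv, if_neg (neg_neg_of_pos ht).not_ge, if_pos ht.le, neg_neg]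
    ring_nf

lemma yjDeriv_monotone {θ : ℝ} (hθ : 1 ≤ θ) : Monotone (yjDeriv θ) := by
  intro a b hab
  unfold yjDeriv
  split_ifs with ha hb hb
  · exact rpow_le_rpow (by linarith) (by linarith) (by linarith)
  · exact absurd (ha.trans hab) hb
  · calc (-a + 1) ^ (1 - θ) ≤ 1 := rpow_le_one_of_one_le_of_nonpos (by linarith) (by linarith)
      _ ≤ (b + 1) ^ (θ - 1) := one_le_rpow (by linarith) (by linarith)
  · exact rpow_le_rpow_of_nonpos (by linarith) (by linarith) (by linarith)

lemma yjDeriv_antitone {θ : ℝ} (hθ : θ ≤ 1) : Antitone (yjDeriv θ) := by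
  have hreflect : yjDeriv θ = fun t => yjDeriv (2 - θ) (-t) := funext fun t => by
    rw [yjDeriv_neg, sub_sub_cancel]
  rw [hreflect]
  exact (yjDeriv_monotone (by linarith)).comp_antitone fun _ _ h => neg_le_neg h

/-- For `1 < θ ≤ 2` the Yeo–Johnson transformation is convex on ℝ, and for
`0 ≤ θ < 1` it is concave on ℝ. -/
theorem yj_convex_concave (θ : ℝ) :
    (1 < θ → θ ≤ 2 → ConvexOn ℝ Set.univ (YJ θ)) ∧
    (0 ≤ θ → θ < 1 → ConcaveOn ℝ Set.univ (YJ θ)) := by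
  refine ⟨fun hθ _ => ?_, fun _ hθ => ?_⟩
  · exact Monotone.convexOn_univ_of_deriv (differentiable_YJ θ)
      (deriv_YJ θ ▸ yjDeriv_monotone hθ.le)
  · exact Antitone.concaveOn_univ_of_deriv (differentiable_YJ θ)
      (deriv_YJ θ ▸ yjDeriv_antitone hθ.le)
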